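/- Let V be a finite type, E ⊆ V × V an edge relation, and w : V × V → ℝ a weight function, and suppose the graph contains no negative-cost cycle. Then for every walk W from s to t there exists an elementary path P from s to t (a walk whose vertices are pairwise distinct) whose cost is less than or equal to the cost of W. -/

import Mathlib

/-!
Induction on the length of the walk. A walk that is not elementary visits some vertex twice,
at positions `a < a + b`; cutting out the closed sub-walk between them gives a shorter walk
with the same endpoints, and its cost drops by the cost of that cycle, which is nonnegative.
-/

open Finset

section WalkCost

variable {V : Type*}

def IsWalk (E : V → V → Prop) (u : ℕ → V) (m : ℕ) : Prop :=
  ∀ i < m, E (u i) (u (i + 1))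

def IsElementary (u : ℕ → V) (m : ℕ) : Prop :=
  ∀ i ≤ m, ∀ j ≤ m, i ≠ j → u i ≠ u j

def walkCost (w : V × V → ℝ) (u : ℕ → V) (m : ℕ) : ℝ :=
  ∑ i ∈ range m, w (u i, u (i + 1))

/-- The walk `u` with the steps from position `a` to position `a + b` removed. -/
def eraseLoop (u : ℕ → V) (a b : ℕ) : ℕ → V :=
  fun l => if l < a then u l else u (l + b)

variable {E : V → V → Prop} {w : V × V → ℝ} {u : ℕ → V} {m a b c : ℕ}

lemma eraseLoop_of_le_left (hloop : u (a + b) = u a) {l : ℕ} (hl : l ≤ a) :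
    eraseLoop u a b l = u l := by
  rcases hl.lt_or_eq with hl | rfl
  · simp [eraseLoop, hl]
  · simp [eraseLoop, hloop]

lemma eraseLoop_of_le_right {l : ℕ} (hl : a ≤ l) : eraseLoop u a b l = u (l + b) := by
  simp [eraseLoop, hl.not_gt]

lemma IsWalk.shift (hu : IsWalk E u m) (h : a + b ≤ m) :
    IsWalk E (fun l => u (a + l)) b :=
  fun l hl => hu (a + l) (by omega)

lemma IsWalk.eraseLoop (hu : IsWalk E u (a + b + c)) (hloop : u (a + b) = u a) :
    IsWalk E (eraseLoop u a b) (a + c) := by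
  intro l hl
  rcases lt_or_ge l a with hla | hla
  · rw [eraseLoop_of_le_left hloop hla.le, eraseLoop_of_le_left hloop hla]
    exact hu l (by omega)
  · rw [eraseLoop_of_le_right hla, eraseLoop_of_le_right (by omega),
      show l + 1 + b = l + b + 1 by omega]
    exact hu (l + b) (by omega)

lemma walkCost_add (w : V × V → ℝ) (u : ℕ → V) (m n : ℕ) :
    walkCost w u (m + n) = walkCost w u m + walkCost w (fun l => u (m + l)) n := by
  simp only [walkCost, sum_range_add, add_assoc]

lemma walkCost_eraseLoop (hloop : u (a + b) = u a) :
    walkCost w u (a + b + c) =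
      walkCost w (eraseLoop u a b) (a + c) + walkCost w (fun l => u (a + l)) b := by
  have hprefix : walkCost w (eraseLoop u a b) a = walkCost w u a :=
    sum_congr rfl fun l hl => by
      rw [eraseLoop_of_le_left hloop (mem_range.mp hl).le,
        eraseLoop_of_le_left hloop (mem_range.mp hl)]
  have hsuffix : walkCost w (fun l => eraseLoop u a b (a + l)) c =
      walkCost w (fun l => u (a + b + l)) c :=
    sum_congr rfl fun l _ => by
      dsimp only
      rw [eraseLoop_of_le_right (by omega), eraseLoop_of_le_right (by omega),
        show a + l + b = a + b + l by omega, show a + (l + 1) + b = a + b + (l + 1) by omega]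
  rw [walkCost_add _ _ (a + b), walkCost_add _ _ a, walkCost_add _ _ a, hprefix, hsuffix]
  ring

lemma exists_loop_of_not_isElementary (h : ¬ IsElementary u m) :
    ∃ a b c, 0 < b ∧ a + b + c = m ∧ u (a + b) = u a := by
  simp only [IsElementary, not_forall, not_not] at h
  obtain ⟨i, hi, j, hj, hij, heq⟩ := h
  rcases hij.lt_or_gt with hij | hij
  · exact ⟨i, j - i, m - j, by omega, by omega, by rw [Nat.add_sub_cancel' hij.le, heq]⟩
  · exact ⟨j, i - j, m - i, by omega, by omega, by rw [Nat.add_sub_cancel' hij.le, heq]⟩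

theorem exists_isElementary_walkCost_le
    (hnoneg : ∀ k (v : ℕ → V), 1 ≤ k → v k = v 0 → IsWalk E v k → 0 ≤ walkCost w v k)
    (m : ℕ) (u : ℕ → V) (hu : IsWalk E u m) :
    ∃ (k : ℕ) (v : ℕ → V), v 0 = u 0 ∧ v k = u m ∧ IsWalk E v k ∧ IsElementary v k ∧
      walkCost w v k ≤ walkCost w u m := by
  induction m using Nat.strong_induction_on generalizing u with
  | _ m ih =>
  by_cases helem : IsElementary u m
  · exact ⟨m, u, rfl, rfl, hu, helem, le_rfl⟩
  obtain ⟨a, b, c, hb, rfl, hloop⟩ := exists_loop_of_not_isElementary helem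
  obtain ⟨k, v, hv0, hvk, hvE, hvelem, hvcost⟩ :=
    ih (a + c) (by omega) (eraseLoop u a b) (hu.eraseLoop hloop)
  have hcycle : 0 ≤ walkCost w (fun l => u (a + l)) b :=
    hnoneg b _ hb (by simpa using hloop) (hu.shift le_self_add)
  refine ⟨k, v, ?_, ?_, hvE, hvelem, ?_⟩
  · rw [hv0, eraseLoop_of_le_left hloop (Nat.zero_le a)]
  · rw [hvk, eraseLoop_of_le_right le_self_add, add_right_comm]
  · rw [walkCost_eraseLoop hloop]
    linarith

end WalkCost

theorem exists_elementary_path_cost_le_walk_general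
    (V : Type*) (E : V → V → Prop) (w : V × V → ℝ)
    (hnoneg : ∀ (k : ℕ) (v : ℕ → V), 1 ≤ k → v k = v 0 →
      (∀ i < k, E (v i) (v (i + 1))) →
      0 ≤ ∑ i ∈ Finset.range k, w (v i, v (i + 1)))
    (s t : V) (m : ℕ) (u : ℕ → V)
    (hu0 : u 0 = s) (hum : u m = t)
    (huE : ∀ i < m, E (u i) (u (i + 1))) :
    ∃ (k : ℕ) (v : ℕ → V), v 0 = s ∧ v k = t ∧
      (∀ i < k, E (v i) (v (i + 1))) ∧
      (∀ i ≤ k, ∀ j ≤ k, i ≠ j → v i ≠ v j) ∧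
      ∑ i ∈ Finset.range k, w (v i, v (i + 1)) ≤
        ∑ i ∈ Finset.range m, w (u i, u (i + 1)) := by
  obtain ⟨k, v, hv0, hvk, hvE, hvelem, hvcost⟩ :=
    exists_isElementary_walkCost_le hnoneg m u huE
  exact ⟨k, v, hv0.trans hu0, hvk.trans hum, hvE, hvelem, hvcost⟩

/-- In a weighted directed graph with no negative-cost cycle, every walk from
`s` to `t` can be replaced by an elementary path (a walk with pairwise-distinct
vertices) from `s` to `t` of at most the same cost. -/
theorem exists_elementary_path_cost_le_walk
    (V : Type*) [Fintype V] (E : V → V → Prop) (w : V × V → ℝ)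
    (hnoneg : ∀ (k : ℕ) (v : ℕ → V), 1 ≤ k → v k = v 0 →
      (∀ i < k, E (v i) (v (i + 1))) →
      0 ≤ ∑ i ∈ Finset.range k, w (v i, v (i + 1)))
    (s t : V) (m : ℕ) (u : ℕ → V)
    (hu0 : u 0 = s) (hum : u m = t)
    (huE : ∀ i < m, E (u i) (u (i + 1))) :
    ∃ (k : ℕ) (v : ℕ → V), v 0 = s ∧ v k = t ∧
      (∀ i < k, E (v i) (v (i + 1))) ∧
      (∀ i ≤ k, ∀ j ≤ k, i ≠ j → v i ≠ v j) ∧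
      ∑ i ∈ Finset.range k, w (v i, v (i + 1)) ≤
        ∑ i ∈ Finset.range m, w (u i, u (i + 1)) :=
  exists_elementary_path_cost_le_walk_general V E w hnoneg s t m u hu0 hum huE
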